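/- Fix an initial demand pmf P_{X₁} on 𝒳, a Markov transition matrix Q on 𝒳, an initial battery pmf P_{S₁} on 𝒮, and battery dynamics S_{t+1} = S_t + Y_t − X_t. For any causal policy q^a = (q^a_1,…,q^a_T), given by conditional pmfs q^a_t(y_t | x^t, s^t, y^{t−1}), there exists a policy q^b = (q^b_1,…,q^b_T) in Q_B, given by conditional pmfs q^b_t(y_t | x_t, s_t, y^{t−1}), such that for every t ∈ {1,…,T} the joint pmf of (X_t, S_t, Y^t) induced by q^b equals that induced by q^a; consequently Σ_{t=1}^T I^{q^a}(X_t, S_t; Y_t | Y^{t−1}) = Σ_{t=1}^T I^{q^b}(X_t, S_t; Y_t | Y^{t−1}). -/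

import Mathlib

open Finset
open scoped Classical

namespace SmartMeter

/-! ### Basic information measures for finitely supported distributions.
All entropies and mutual informations are in bits (base-2 logarithms). -/

/-- Probability that the random variable `Z` takes the value `z` under the pmf `p`. -/
noncomputable def pr {Ω α : Type*} [Fintype Ω] [DecidableEq α]
    (p : Ω → ℝ) (Z : Ω → α) (z : α) : ℝ :=
  ∑ ω ∈ Finset.univ.filter (fun ω => Z ω = z), p ω

/-- Shannon entropy (in bits) of the random variable `Z` under the pmf `p`. -/
noncomputable def ent {Ω α : Type*} [Fintype Ω] [DecidableEq α]
    (p : Ω → ℝ) (Z : Ω → α) : ℝ :=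
  -∑ z ∈ Finset.univ.image Z, pr p Z z * Real.logb 2 (pr p Z z)

/-- Mutual information `I(A; B)`. -/
noncomputable def mutInfo {Ω α β : Type*} [Fintype Ω] [DecidableEq α] [DecidableEq β]
    (p : Ω → ℝ) (A : Ω → α) (B : Ω → β) : ℝ :=
  ent p A + ent p B - ent p (fun ω => (A ω, B ω))

/-- Conditional entropy `H(A | C)`. -/
noncomputable def condEnt {Ω α γ : Type*} [Fintype Ω] [DecidableEq α] [DecidableEq γ]
    (p : Ω → ℝ) (A : Ω → α) (C : Ω → γ) : ℝ :=
  ent p (fun ω => (A ω, C ω)) - ent p C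

/-- Conditional mutual information `I(A; B | C)`. -/
noncomputable def condMutInfo {Ω α β γ : Type*} [Fintype Ω] [DecidableEq α] [DecidableEq β]
    [DecidableEq γ] (p : Ω → ℝ) (A : Ω → α) (B : Ω → β) (C : Ω → γ) : ℝ :=
  ent p (fun ω => (A ω, C ω)) + ent p (fun ω => (B ω, C ω))
    - ent p (fun ω => (A ω, B ω, C ω)) - ent p C

/-- `p` is a probability mass function on the finite type `Ω`. -/
def IsPMF {Ω : Type*} [Fintype Ω] (p : Ω → ℝ) : Prop :=
  (∀ ω, 0 ≤ p ω) ∧ ∑ ω, p ω = 1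

/-- Extension of a pmf on `{0, …, n}` to an integer-indexed function (zero out of range). -/
noncomputable def extZ {n : ℕ} (f : Fin (n + 1) → ℝ) (k : ℤ) : ℝ :=
  if h : 0 ≤ k ∧ k ≤ (n : ℤ) then f ⟨k.toNat, by omega⟩ else 0

/-! ### The single-letter quantity `J*` -/

/-- `I(S - X; X)` for independent `X ~ PX` on `{0,…,mx}` and `S ~ θ` on `{0,…,ms}`. -/
noncomputable def iidMI (mx ms : ℕ) (PX : Fin (mx + 1) → ℝ) (θ : Fin (ms + 1) → ℝ) : ℝ :=
  mutInfo (fun ω : Fin (mx + 1) × Fin (ms + 1) => PX ω.1 * θ ω.2)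
    (fun ω => ((ω.2 : ℕ) : ℤ) - ((ω.1 : ℕ) : ℤ)) (fun ω => ω.1)

/-- `J* = min over pmfs θ on 𝒮 of I(S - X; X)`. -/
noncomputable def Jstar (mx ms : ℕ) (PX : Fin (mx + 1) → ℝ) : ℝ :=
  sInf {r : ℝ | ∃ θ : Fin (ms + 1) → ℝ, IsPMF θ ∧ iidMI mx ms PX θ = r}

/-! ### The structured policy `b*` -/

/-- `ξ(w) = Σ_{(x,s) : s - x = w} PX(x) θ(s)`, the pmf of `W = S - X`. -/
noncomputable def xiOf (mx ms : ℕ) (PX : Fin (mx + 1) → ℝ) (θ : Fin (ms + 1) → ℝ)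
    (w : ℤ) : ℝ :=
  ∑ x : Fin (mx + 1), ∑ s : Fin (ms + 1),
    if ((s : ℕ) : ℤ) - ((x : ℕ) : ℤ) = w then PX x * θ s else 0

/-- The structured policy with respect to `(θ, ξ)`:
`b(y|w) = PX(y) θ(y + w) / ξ(w)` for `y ∈ 𝒳 ∩ 𝒴₀(w)` (when `ξ(w) > 0`), else `0`. -/
noncomputable def bstar (mx my ms : ℕ) (PX : Fin (mx + 1) → ℝ) (θ : Fin (ms + 1) → ℝ)
    (w : ℤ) (y : Fin (my + 1)) : ℝ :=
  if xiOf mx ms PX θ w = 0 then 0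
  else extZ PX ((y : ℕ) : ℤ) * extZ θ (((y : ℕ) : ℤ) + w) / xiOf mx ms PX θ w

/-! ### Trajectory spaces, policies and induced joint laws.
Time is indexed from `0`; `ω = (s₁, x, y)` records the initial battery state `S₁ = ω.1`,
the demands `X_{t+1} = ω.2.1 t` and the outputs `Y_{t+1} = ω.2.2 t` for `t = 0, …, T-1`. -/

/-- Trajectories of horizon `T`. -/
abbrev Traj (mx my ms T : ℕ) :=
  Fin (ms + 1) × (Fin T → Fin (mx + 1)) × (Fin T → Fin (my + 1))

variable {mx my ms T : ℕ}

/-- Demand at (0-based) time `t`, as an integer (junk value `0` for `t ≥ T`). -/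
def Xat (ω : Traj mx my ms T) (t : ℕ) : ℤ :=
  if h : t < T then ((ω.2.1 ⟨t, h⟩ : ℕ) : ℤ) else 0

/-- Output at (0-based) time `t`, as an integer (junk value `0` for `t ≥ T`). -/
def Yat (ω : Traj mx my ms T) (t : ℕ) : ℤ :=
  if h : t < T then ((ω.2.2 ⟨t, h⟩ : ℕ) : ℤ) else 0

/-- Battery state at (0-based) time `t`: `S_{t+1} = S_t + Y_t - X_t`, `Sat ω 0 = S₁`. -/
def Sat (ω : Traj mx my ms T) (t : ℕ) : ℤ :=
  ((ω.1 : ℕ) : ℤ) + ∑ i ∈ Finset.range t, (Yat ω i - Xat ω i)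

/-- `W_t = S_t - X_t`. -/
def Wat (ω : Traj mx my ms T) (t : ℕ) : ℤ := Sat ω t - Xat ω t

/-- A general causal (class `Q_A`) randomized battery policy:
`q_t(y_t | x^t, s^t, y^{t-1})`; since `s^t` is determined by `(s₁, x^{t-1}, y^{t-1})`,
the policy is a function of `(x^t, s₁, y^{t-1})`. -/
def PolicyA (mx my ms : ℕ) : Type :=
  (t : ℕ) → (Fin (t + 1) → Fin (mx + 1)) → Fin (ms + 1) → (Fin t → Fin (my + 1)) →
    Fin (my + 1) → ℝ

/-- A class-`Q_B` policy: `q_t(y_t | x_t, s_t, y^{t-1})`. -/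
def PolicyB (mx my ms : ℕ) : Type :=
  (t : ℕ) → Fin (mx + 1) → ℤ → (Fin t → Fin (my + 1)) → Fin (my + 1) → ℝ

/-- The battery state `S_t` computed from `s₁` and the history `(x^t, y^{t-1})`. -/
def hstate {t : ℕ} (s1 : Fin (ms + 1)) (x : Fin (t + 1) → Fin (mx + 1))
    (y : Fin t → Fin (my + 1)) : ℤ :=
  ((s1 : ℕ) : ℤ) + ∑ i : Fin t, (((y i : ℕ) : ℤ) - ((x i.castSucc : ℕ) : ℤ))

/-- Each `q_t(· | x^t, s^t, y^{t-1})` is a pmf on `𝒴`. -/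
def CondPMFA (q : PolicyA mx my ms) : Prop :=
  ∀ (t : ℕ) (x : Fin (t + 1) → Fin (mx + 1)) (s1 : Fin (ms + 1)) (y : Fin t → Fin (my + 1)),
    (∀ yt, 0 ≤ q t x s1 y yt) ∧ ∑ yt, q t x s1 y yt = 1

/-- Feasibility of a class-`Q_A` policy: conditional pmfs supported on
`𝒴₀(s_t - x_t) = {y ∈ 𝒴 : s_t - x_t + y ∈ 𝒮}`. -/
def FeasibleA (q : PolicyA mx my ms) : Prop :=
  CondPMFA q ∧
  ∀ (t : ℕ) (x : Fin (t + 1) → Fin (mx + 1)) (s1 : Fin (ms + 1)) (y : Fin t → Fin (my + 1)),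
    ∀ yt, q t x s1 y yt ≠ 0 →
      0 ≤ hstate s1 x y - ((x (Fin.last t) : ℕ) : ℤ) + ((yt : ℕ) : ℤ) ∧
      hstate s1 x y - ((x (Fin.last t) : ℕ) : ℤ) + ((yt : ℕ) : ℤ) ≤ (ms : ℤ)

/-- Each `q_t(· | x_t, s_t, y^{t-1})` is a pmf on `𝒴`. -/
def CondPMFB (q : PolicyB mx my ms) : Prop :=
  ∀ (t : ℕ) (xt : Fin (mx + 1)) (s : ℤ) (y : Fin t → Fin (my + 1)),
    (∀ yt, 0 ≤ q t xt s y yt) ∧ ∑ yt, q t xt s y yt = 1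

/-- Feasibility of a class-`Q_B` policy. -/
def FeasibleB (q : PolicyB mx my ms) : Prop :=
  CondPMFB q ∧
  ∀ (t : ℕ) (xt : Fin (mx + 1)) (s : ℤ) (y : Fin t → Fin (my + 1)),
    0 ≤ s → s ≤ (ms : ℤ) →
    ∀ yt, q t xt s y yt ≠ 0 →
      0 ≤ s - ((xt : ℕ) : ℤ) + ((yt : ℕ) : ℤ) ∧
      s - ((xt : ℕ) : ℤ) + ((yt : ℕ) : ℤ) ≤ (ms : ℤ)

/-- The demand prefix `x^t = (x_0, …, x_t)` of a trajectory. -/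
def prefX (ω : Traj mx my ms T) (t : Fin T) : Fin ((t : ℕ) + 1) → Fin (mx + 1) :=
  fun i => ω.2.1 ⟨(i : ℕ), lt_of_le_of_lt (Nat.lt_succ_iff.mp i.isLt) t.isLt⟩

/-- The output prefix `y^{t-1} = (y_0, …, y_{t-1})` of a trajectory. -/
def prefY (ω : Traj mx my ms T) (t : Fin T) : Fin (t : ℕ) → Fin (my + 1) :=
  fun i => ω.2.2 ⟨(i : ℕ), i.isLt.trans t.isLt⟩

/-- Joint law on trajectories induced by i.i.d. demand `PX`, initial battery pmf `PS1`
(independent of the demand), and a class-`Q_A` policy `q`. -/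
noncomputable def jointA (PS1 : Fin (ms + 1) → ℝ) (PX : Fin (mx + 1) → ℝ)
    (q : PolicyA mx my ms) (T : ℕ) (ω : Traj mx my ms T) : ℝ :=
  PS1 ω.1 * ∏ t : Fin T,
    (PX (ω.2.1 t) * q (t : ℕ) (prefX ω t) ω.1 (prefY ω t) (ω.2.2 t))

/-- Weight of a demand trajectory under a Markov chain `(PX1, Qm)`. -/
noncomputable def markovWt (PX1 : Fin (mx + 1) → ℝ) (Qm : Fin (mx + 1) → Fin (mx + 1) → ℝ)
    {T : ℕ} (x : Fin T → Fin (mx + 1)) : ℝ :=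
  ∏ t : Fin T,
    if _h : (t : ℕ) = 0 then PX1 (x t)
    else Qm (x ⟨(t : ℕ) - 1, lt_of_le_of_lt (Nat.sub_le _ _) t.isLt⟩) (x t)

/-- Joint law on trajectories induced by Markov demand and a class-`Q_A` policy. -/
noncomputable def jointAMarkov (PS1 : Fin (ms + 1) → ℝ) (PX1 : Fin (mx + 1) → ℝ)
    (Qm : Fin (mx + 1) → Fin (mx + 1) → ℝ) (q : PolicyA mx my ms) (T : ℕ)
    (ω : Traj mx my ms T) : ℝ :=
  PS1 ω.1 * markovWt PX1 Qm ω.2.1 *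
    ∏ t : Fin T, q (t : ℕ) (prefX ω t) ω.1 (prefY ω t) (ω.2.2 t)

/-- Joint law on trajectories induced by Markov demand and a class-`Q_B` policy. -/
noncomputable def jointBMarkov (PS1 : Fin (ms + 1) → ℝ) (PX1 : Fin (mx + 1) → ℝ)
    (Qm : Fin (mx + 1) → Fin (mx + 1) → ℝ) (q : PolicyB mx my ms) (T : ℕ)
    (ω : Traj mx my ms T) : ℝ :=
  PS1 ω.1 * markovWt PX1 Qm ω.2.1 *
    ∏ t : Fin T, q (t : ℕ) (ω.2.1 t) (Sat ω (t : ℕ)) (prefY ω t) (ω.2.2 t)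

/-- The memoryless time-invariant policy `q_t(y | x, s) = b*(y | s - x)`, as a member of the
class of general causal policies. -/
noncomputable def structuredPolicyA (mx my ms : ℕ) (PX : Fin (mx + 1) → ℝ)
    (θ : Fin (ms + 1) → ℝ) : PolicyA mx my ms :=
  fun t x s1 y yt => bstar mx my ms PX θ (hstate s1 x y - ((x (Fin.last t) : ℕ) : ℤ)) yt

/-!
Conditioning the step law of `qa` on the information state `(X_t, S_t, Y^{t-1})` gives a policy
in `Q_B`. Because the demand is Markov and `S_{t+1} = S_t + Y_t - X_t`, the law of
`(X_{t+1}, S_{t+1}, Y^t)` is computed from the law of `(X_t, S_t, Y^t)` and the transition matrix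
alone, and the law of `(X_t, S_t, Y^t)` is the law of `(X_t, S_t, Y^{t-1})` times the conditional
pmf of `Y_t`, which both policies share by construction. Induction on `t` matches all these laws,
and the conditional mutual informations are functions of them.
-/

section InformationMeasures

variable {Ω Ω' α β : Type*} [Fintype Ω] [Fintype Ω'] [DecidableEq α] [DecidableEq β]

lemma pr_eq_zero_of_forall_ne {p : Ω → ℝ} {Z : Ω → α} {z : α} (h : ∀ ω, Z ω ≠ z) :
    pr p Z z = 0 :=
  Finset.sum_eq_zero fun ω hω => absurd (Finset.mem_filter.mp hω).2 (h ω)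

lemma pr_comp_eq_sum {p : Ω → ℝ} {Z : Ω → α} {A : Finset α} (hA : ∀ ω, Z ω ∈ A)
    (Φ : α → β) (u : β) :
    pr p (fun ω => Φ (Z ω)) u = ∑ v ∈ A with Φ v = u, pr p Z v := by
  rw [pr, ← Finset.sum_fiberwise_of_maps_to (g := Z) (t := {v ∈ A | Φ v = u})
    fun ω hω => Finset.mem_filter.mpr ⟨hA ω, (Finset.mem_filter.mp hω).2⟩]
  refine Finset.sum_congr rfl fun v hv => ?_
  rw [pr, Finset.filter_filter]
  refine Finset.sum_congr (Finset.filter_congr fun ω _ => ?_) fun _ _ => rfl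
  exact ⟨And.right, fun h => ⟨h ▸ (Finset.mem_filter.mp hv).2, h⟩⟩

lemma pr_comp_congr {p : Ω → ℝ} {Z : Ω → α} {p' : Ω' → ℝ} {Z' : Ω' → α}
    (h : ∀ v, pr p Z v = pr p' Z' v) (Φ : α → β) (u : β) :
    pr p (fun ω => Φ (Z ω)) u = pr p' (fun ω => Φ (Z' ω)) u := by
  rw [pr_comp_eq_sum (A := Finset.univ.image Z ∪ Finset.univ.image Z') (by simp),
    pr_comp_eq_sum (A := Finset.univ.image Z ∪ Finset.univ.image Z') (by simp)]
  exact Finset.sum_congr rfl fun v _ => h v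

lemma ent_eq_sum_of_mem {p : Ω → ℝ} {Z : Ω → α} {A : Finset α} (hA : ∀ ω, Z ω ∈ A) :
    ent p Z = -∑ z ∈ A, pr p Z z * Real.logb 2 (pr p Z z) := by
  rw [ent]
  congr 1
  refine Finset.sum_subset (by simpa [Finset.subset_iff] using hA) fun z _ hz => ?_
  have hZ : ∀ ω, Z ω ≠ z := fun ω hω =>
    hz (hω ▸ Finset.mem_image_of_mem Z (Finset.mem_univ _))
  rw [pr_eq_zero_of_forall_ne hZ, zero_mul]

lemma ent_congr {p : Ω → ℝ} {Z : Ω → α} {p' : Ω' → ℝ} {Z' : Ω' → α}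
    (h : ∀ v, pr p Z v = pr p' Z' v) : ent p Z = ent p' Z' := by
  rw [ent_eq_sum_of_mem (A := Finset.univ.image Z ∪ Finset.univ.image Z') (by simp),
    ent_eq_sum_of_mem (A := Finset.univ.image Z ∪ Finset.univ.image Z') (by simp)]
  simp only [h]

lemma condMutInfo_comp_congr {γ δ ε : Type*} [DecidableEq γ] [DecidableEq δ] [DecidableEq ε]
    {p : Ω → ℝ} {Z : Ω → α} {p' : Ω' → ℝ} {Z' : Ω' → α}
    (h : ∀ v, pr p Z v = pr p' Z' v) (ΦA : α → γ) (ΦB : α → δ) (ΦC : α → ε) :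
    condMutInfo p (fun ω => ΦA (Z ω)) (fun ω => ΦB (Z ω)) (fun ω => ΦC (Z ω))
      = condMutInfo p' (fun ω => ΦA (Z' ω)) (fun ω => ΦB (Z' ω)) (fun ω => ΦC (Z' ω)) := by
  rw [condMutInfo, condMutInfo, ent_congr (pr_comp_congr h fun v => (ΦA v, ΦC v)),
    ent_congr (pr_comp_congr h fun v => (ΦB v, ΦC v)),
    ent_congr (pr_comp_congr h fun v => (ΦA v, ΦB v, ΦC v)), ent_congr (pr_comp_congr h ΦC)]

end InformationMeasures

section Trajectories

lemma sum_pi_snoc {n : ℕ} {β M : Type*} [Fintype β] [AddCommMonoid M]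
    (F : (Fin (n + 1) → β) → M) :
    ∑ g, F g = ∑ f : Fin n → β, ∑ b : β, F (Fin.snoc f b) := by
  rw [← (Fin.snocEquiv fun _ => β).sum_comp, Fintype.sum_prod_type, Finset.sum_comm]
  rfl

lemma snoc_mk_of_lt {n : ℕ} {β : Type*} (f : Fin n → β) (b : β) {i : ℕ} (h : i < n)
    (h' : i < n + 1) : (Fin.snoc f b : Fin (n + 1) → β) ⟨i, h'⟩ = f ⟨i, h⟩ :=
  Fin.snoc_castSucc (α := fun _ => β) b f ⟨i, h⟩

def snocT {n : ℕ} (ω : Traj mx my ms n) (x : Fin (mx + 1)) (y : Fin (my + 1)) :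
    Traj mx my ms (n + 1) :=
  (ω.1, Fin.snoc ω.2.1 x, Fin.snoc ω.2.2 y)

lemma sum_traj_succ {n : ℕ} {M : Type*} [AddCommMonoid M] (F : Traj mx my ms (n + 1) → M) :
    ∑ ω, F ω = ∑ ω : Traj mx my ms n, ∑ x, ∑ y, F (snocT ω x y) := by
  simp only [Fintype.sum_prod_type, sum_pi_snoc]
  refine Finset.sum_congr rfl fun s1 _ => Finset.sum_congr rfl fun xs _ => ?_
  rw [Finset.sum_comm]
  rfl

lemma Xat_of_lt (ω : Traj mx my ms T) {i : ℕ} (h : i < T) :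
    Xat ω i = ((ω.2.1 ⟨i, h⟩ : ℕ) : ℤ) :=
  dif_pos h

lemma Yat_of_lt (ω : Traj mx my ms T) {i : ℕ} (h : i < T) :
    Yat ω i = ((ω.2.2 ⟨i, h⟩ : ℕ) : ℤ) :=
  dif_pos h

variable {n : ℕ} (ω : Traj mx my ms n) (x : Fin (mx + 1)) (y : Fin (my + 1))

lemma Xat_snocT_of_lt {i : ℕ} (h : i < n) : Xat (snocT ω x y) i = Xat ω i := by
  rw [Xat_of_lt _ (by omega), Xat_of_lt _ h]
  exact congrArg _ (congrArg _ (snoc_mk_of_lt ω.2.1 x h _))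

lemma Yat_snocT_of_lt {i : ℕ} (h : i < n) : Yat (snocT ω x y) i = Yat ω i := by
  rw [Yat_of_lt _ (by omega), Yat_of_lt _ h]
  exact congrArg _ (congrArg _ (snoc_mk_of_lt ω.2.2 y h _))

lemma Xat_snocT_self : Xat (snocT ω x y) n = (x : ℕ) := by
  rw [Xat_of_lt _ n.lt_succ_self]
  exact congrArg _ (congrArg _ (Fin.snoc_last (α := fun _ => Fin (mx + 1)) ..))

lemma Yat_snocT_self : Yat (snocT ω x y) n = (y : ℕ) := by
  rw [Yat_of_lt _ n.lt_succ_self]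
  exact congrArg _ (congrArg _ (Fin.snoc_last (α := fun _ => Fin (my + 1)) ..))

lemma Sat_snocT_of_le {k : ℕ} (h : k ≤ n) : Sat (snocT ω x y) k = Sat ω k :=
  congrArg _ (Finset.sum_congr rfl fun i hi => by
    have hi : i < n := (Finset.mem_range.mp hi).trans_le h
    rw [Xat_snocT_of_lt ω x y hi, Yat_snocT_of_lt ω x y hi])

lemma Sat_snocT_succ : Sat (snocT ω x y) (n + 1) = Sat ω n + (y : ℕ) - (x : ℕ) := by
  rw [Sat, Finset.sum_range_succ, ← add_assoc, ← Sat, Sat_snocT_of_le ω x y le_rfl,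
    Xat_snocT_self, Yat_snocT_self, add_sub_assoc]

lemma prefX_snocT_castSucc (t : Fin n) : prefX (snocT ω x y) t.castSucc = prefX ω t :=
  funext fun i => snoc_mk_of_lt ω.2.1 x ((Nat.lt_succ_iff.mp i.isLt).trans_lt t.isLt) _

lemma prefY_snocT_castSucc (t : Fin n) : prefY (snocT ω x y) t.castSucc = prefY ω t :=
  funext fun i => snoc_mk_of_lt ω.2.2 y (i.isLt.trans t.isLt) _

lemma prefX_snocT_last : prefX (snocT ω x y) (Fin.last n) = Fin.snoc ω.2.1 x :=
  rfl

lemma prefY_snocT_last : prefY (snocT ω x y) (Fin.last n) = ω.2.2 :=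
  funext fun i => snoc_mk_of_lt ω.2.2 y i.isLt _

end Trajectories

section JointLaw

lemma hstate_prefX_prefY (ω : Traj mx my ms T) (t : Fin T) :
    hstate ω.1 (prefX ω t) (prefY ω t) = Sat ω t := by
  rw [hstate, Sat, ← Fin.sum_univ_eq_sum_range]
  refine congrArg _ (Finset.sum_congr rfl fun i _ => ?_)
  rw [Yat_of_lt ω (i.isLt.trans t.isLt), Xat_of_lt ω (i.isLt.trans t.isLt)]
  rfl

lemma hstate_snoc {n : ℕ} (ω : Traj mx my ms n) (x : Fin (mx + 1)) :
    hstate ω.1 (Fin.snoc ω.2.1 x) ω.2.2 = Sat ω n := by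
  rw [hstate, Sat, ← Fin.sum_univ_eq_sum_range]
  refine congrArg _ (Finset.sum_congr rfl fun i _ => ?_)
  rw [Yat_of_lt ω i.isLt, Xat_of_lt ω i.isLt, Fin.snoc_castSucc]

variable (PS1 : Fin (ms + 1) → ℝ) (PX1 : Fin (mx + 1) → ℝ)
  (Qm : Fin (mx + 1) → Fin (mx + 1) → ℝ)

noncomputable def markovStep (n : ℕ) (x : Fin n → Fin (mx + 1)) (x' : Fin (mx + 1)) : ℝ :=
  if _h : n = 0 then PX1 x' else Qm (x ⟨n - 1, by omega⟩) x'

lemma markovWt_snoc {n : ℕ} (x : Fin n → Fin (mx + 1)) (x' : Fin (mx + 1)) :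
    markovWt PX1 Qm (Fin.snoc x x' : Fin (n + 1) → Fin (mx + 1))
      = markovWt PX1 Qm x * markovStep PX1 Qm n x x' := by
  rw [markovWt, Fin.prod_univ_castSucc, markovWt, markovStep]
  congr 1
  · refine Finset.prod_congr rfl fun t _ => ?_
    simp only [Fin.val_castSucc, Fin.snoc_castSucc]
    split_ifs
    · rfl
    · rw [snoc_mk_of_lt x x' (by omega)]
  · simp only [Fin.val_last, Fin.snoc_last]
    split_ifs
    · rfl
    · rw [snoc_mk_of_lt x x' (by omega)]

lemma markovStep_snoc {n : ℕ} (x : Fin n → Fin (mx + 1)) (x₀ x' : Fin (mx + 1)) :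
    markovStep PX1 Qm (n + 1) (Fin.snoc x x₀) x' = Qm x₀ x' := by
  rw [markovStep, dif_neg n.succ_ne_zero]
  exact congrArg (Qm · x') (Fin.snoc_last (α := fun _ => Fin (mx + 1)) ..)

variable {PS1 PX1 Qm}

lemma sum_markovStep (hPX1 : IsPMF PX1) (hQm : ∀ x, IsPMF (Qm x)) (n : ℕ)
    (x : Fin n → Fin (mx + 1)) : ∑ x', markovStep PX1 Qm n x x' = 1 := by
  unfold markovStep
  split
  · exact hPX1.2
  · exact (hQm _).2

lemma markovWt_nonneg (hPX1 : IsPMF PX1) (hQm : ∀ x, IsPMF (Qm x)) {n : ℕ}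
    (x : Fin n → Fin (mx + 1)) : 0 ≤ markovWt PX1 Qm x :=
  Finset.prod_nonneg fun t _ => by
    split
    · exact hPX1.1 _
    · exact (hQm _).1 _

lemma jointAMarkov_zero (q : PolicyA mx my ms) (ω : Traj mx my ms 0) :
    jointAMarkov PS1 PX1 Qm q 0 ω = PS1 ω.1 := by
  simp [jointAMarkov, markovWt]

lemma jointAMarkov_snocT (q : PolicyA mx my ms) {n : ℕ} (ω : Traj mx my ms n)
    (x : Fin (mx + 1)) (y : Fin (my + 1)) :
    jointAMarkov PS1 PX1 Qm q (n + 1) (snocT ω x y)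
      = jointAMarkov PS1 PX1 Qm q n ω * markovStep PX1 Qm n ω.2.1 x
        * q n (Fin.snoc ω.2.1 x) ω.1 ω.2.2 y := by
  rw [jointAMarkov, jointAMarkov, Fin.prod_univ_castSucc]
  simp only [prefX_snocT_castSucc, prefY_snocT_castSucc, prefX_snocT_last, prefY_snocT_last]
  simp only [snocT, markovWt_snoc, Fin.snoc_castSucc, Fin.snoc_last, Fin.val_castSucc,
    Fin.val_last]
  ring

lemma jointAMarkov_nonneg (hPS1 : IsPMF PS1) (hPX1 : IsPMF PX1) (hQm : ∀ x, IsPMF (Qm x))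
    {q : PolicyA mx my ms} (hq : CondPMFA q) (n : ℕ) (ω : Traj mx my ms n) :
    0 ≤ jointAMarkov PS1 PX1 Qm q n ω :=
  mul_nonneg (mul_nonneg (hPS1.1 _) (markovWt_nonneg hPX1 hQm _))
    (Finset.prod_nonneg fun _ _ => (hq _ _ _ _).1 _)

def PolicyB.toA (q : PolicyB mx my ms) : PolicyA mx my ms :=
  fun t x s1 y => q t (x (Fin.last t)) (hstate s1 x y) y

lemma CondPMFB.toA {q : PolicyB mx my ms} (hq : CondPMFB q) : CondPMFA q.toA :=
  fun t x s1 y => hq t (x (Fin.last t)) (hstate s1 x y) y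

lemma jointBMarkov_eq_jointAMarkov_toA (q : PolicyB mx my ms) (T : ℕ) :
    jointBMarkov PS1 PX1 Qm q T = jointAMarkov PS1 PX1 Qm q.toA T :=
  funext fun ω => by
    simp only [jointBMarkov, jointAMarkov, PolicyB.toA, hstate_prefX_prefY]
    rfl

end JointLaw

section InformationState

variable {PS1 : Fin (ms + 1) → ℝ} {PX1 : Fin (mx + 1) → ℝ}
  {Qm : Fin (mx + 1) → Fin (mx + 1) → ℝ}

lemma pr_jointAMarkov_succ (hPX1 : IsPMF PX1) (hQm : ∀ x, IsPMF (Qm x))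
    {q : PolicyA mx my ms} (hq : CondPMFA q) {n : ℕ} {α : Type*} [DecidableEq α]
    {Z' : Traj mx my ms (n + 1) → α} {Z : Traj mx my ms n → α}
    (hZ : ∀ ω x y, Z' (snocT ω x y) = Z ω) (v : α) :
    pr (jointAMarkov PS1 PX1 Qm q (n + 1)) Z' v = pr (jointAMarkov PS1 PX1 Qm q n) Z v := by
  rw [pr, Finset.sum_filter, sum_traj_succ, pr, Finset.sum_filter]
  refine Finset.sum_congr rfl fun ω _ => ?_
  by_cases h : Z ω = v
  · simp only [hZ, h, if_true, jointAMarkov_snocT, ← Finset.mul_sum, (hq _ _ _ _).2, mul_one,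
      sum_markovStep hPX1 hQm]
  · simp only [hZ, h, if_false, Finset.sum_const_zero]

def obsAt (t : ℕ) (ω : Traj mx my ms T) : ℤ × ℤ × (Fin (t + 1) → ℤ) :=
  (Xat ω t, Sat ω t, fun i : Fin (t + 1) => Yat ω i)

lemma obsAt_snocT_of_lt {t n : ℕ} (h : t < n) (ω : Traj mx my ms n) (x : Fin (mx + 1))
    (y : Fin (my + 1)) : obsAt t (snocT ω x y) = obsAt t ω := by
  simp only [obsAt, Xat_snocT_of_lt ω x y h, Sat_snocT_of_le ω x y h.le,
    Yat_snocT_of_lt ω x y (Nat.lt_of_lt_of_le (Fin.isLt _) h)]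

lemma pr_obsAt_eq_of_lt (hPX1 : IsPMF PX1) (hQm : ∀ x, IsPMF (Qm x))
    {q : PolicyA mx my ms} (hq : CondPMFA q) {t : ℕ} (ht : t < T)
    (v : ℤ × ℤ × (Fin (t + 1) → ℤ)) :
    pr (jointAMarkov PS1 PX1 Qm q T) (obsAt t) v
      = pr (jointAMarkov PS1 PX1 Qm q (t + 1)) (obsAt t) v := by
  induction T, ht using Nat.le_induction with
  | base => rfl
  | succ n hn ih => rw [pr_jointAMarkov_succ hPX1 hQm hq (obsAt_snocT_of_lt hn) v, ih]

def stepState {t : ℕ} (ω : Traj mx my ms (t + 1)) :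
    Fin (mx + 1) × ℤ × (Fin t → Fin (my + 1)) × Fin (my + 1) :=
  (ω.2.1 (Fin.last t), Sat ω t, Fin.init ω.2.2, ω.2.2 (Fin.last t))

lemma stepState_snocT {t : ℕ} (ω : Traj mx my ms t) (x : Fin (mx + 1)) (y : Fin (my + 1)) :
    stepState (snocT ω x y) = (x, Sat ω t, ω.2.2, y) := by
  simp only [stepState, snocT, Fin.snoc_last, Fin.init_snoc]
  rw [← snocT, Sat_snocT_of_le ω x y le_rfl]

def obsOfStepState {t : ℕ} (u : Fin (mx + 1) × ℤ × (Fin t → Fin (my + 1)) × Fin (my + 1)) :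
    ℤ × ℤ × (Fin (t + 1) → ℤ) :=
  ((u.1 : ℕ), u.2.1, Fin.snoc (fun i => ((u.2.2.1 i : ℕ) : ℤ)) (u.2.2.2 : ℕ))

lemma obsAt_eq_comp_stepState {t : ℕ} :
    (obsAt t : Traj mx my ms (t + 1) → _) = fun ω => obsOfStepState (stepState ω) := by
  funext ω
  simp only [obsAt, stepState, obsOfStepState]
  refine Prod.ext (Xat_of_lt ω t.lt_succ_self) (Prod.ext rfl (funext fun i => ?_))
  refine Fin.lastCases ?_ (fun j => ?_) i
  · dsimp only
    rw [Fin.snoc_last]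
    exact Yat_of_lt ω t.lt_succ_self
  · dsimp only
    rw [Fin.snoc_castSucc]
    exact Yat_of_lt ω (by omega)

variable (PS1 PX1 Qm)

/- With 0-based times, `stepLaw q t x s y y'` is the probability of
`(X_t, S_t, Y^{t-1}, Y_t) = (x, s, y, y')` and `stateLaw q t x s y` that of
`(X_t, S_t, Y^{t-1}) = (x, s, y)`, the latter expanded over the histories of length `t`. -/

noncomputable def stepLaw (q : PolicyA mx my ms) (t : ℕ) (x : Fin (mx + 1)) (s : ℤ)
    (y : Fin t → Fin (my + 1)) (y' : Fin (my + 1)) : ℝ :=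
  pr (jointAMarkov PS1 PX1 Qm q (t + 1)) stepState (x, s, y, y')

noncomputable def stateLaw (q : PolicyA mx my ms) (t : ℕ) (x : Fin (mx + 1)) (s : ℤ)
    (y : Fin t → Fin (my + 1)) : ℝ :=
  ∑ ω : Traj mx my ms t with Sat ω t = s ∧ ω.2.2 = y,
    jointAMarkov PS1 PX1 Qm q t ω * markovStep PX1 Qm t ω.2.1 x

variable {PS1 PX1 Qm}

lemma stepLaw_eq_sum (q : PolicyA mx my ms) (t : ℕ) (x : Fin (mx + 1)) (s : ℤ)
    (y : Fin t → Fin (my + 1)) (y' : Fin (my + 1)) :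
    stepLaw PS1 PX1 Qm q t x s y y'
      = ∑ ω : Traj mx my ms t with Sat ω t = s ∧ ω.2.2 = y,
          jointAMarkov PS1 PX1 Qm q t ω * markovStep PX1 Qm t ω.2.1 x
            * q t (Fin.snoc ω.2.1 x) ω.1 ω.2.2 y' := by
  rw [stepLaw, pr, Finset.sum_filter, sum_traj_succ, Finset.sum_filter]
  refine Finset.sum_congr rfl fun ω _ => ?_
  simp only [stepState_snocT, Prod.mk.injEq, jointAMarkov_snocT]
  simp only [ite_and, Finset.sum_ite_irrel, Finset.sum_const_zero, Finset.sum_ite_eq',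
    Finset.mem_univ, if_true]

lemma sum_stepLaw {q : PolicyA mx my ms} (hq : CondPMFA q) (t : ℕ) (x : Fin (mx + 1)) (s : ℤ)
    (y : Fin t → Fin (my + 1)) :
    ∑ y', stepLaw PS1 PX1 Qm q t x s y y' = stateLaw PS1 PX1 Qm q t x s y := by
  simp only [stepLaw_eq_sum]
  rw [Finset.sum_comm]
  refine Finset.sum_congr rfl fun ω _ => ?_
  rw [← Finset.mul_sum, (hq _ _ _ _).2, mul_one]

lemma stepLaw_toA (q : PolicyB mx my ms) (t : ℕ) (x : Fin (mx + 1)) (s : ℤ)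
    (y : Fin t → Fin (my + 1)) (y' : Fin (my + 1)) :
    stepLaw PS1 PX1 Qm q.toA t x s y y' = q t x s y y' * stateLaw PS1 PX1 Qm q.toA t x s y := by
  rw [stepLaw_eq_sum, stateLaw, Finset.mul_sum]
  refine Finset.sum_congr rfl fun ω hω => ?_
  obtain ⟨hs, hy⟩ := (Finset.mem_filter.mp hω).2
  rw [PolicyB.toA, Fin.snoc_last, hstate_snoc, hs, hy, mul_comm]

lemma stateLaw_succ (q : PolicyA mx my ms) (t : ℕ) (x' : Fin (mx + 1)) (s' : ℤ)
    (y : Fin t → Fin (my + 1)) (y' : Fin (my + 1)) :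
    stateLaw PS1 PX1 Qm q (t + 1) x' s' (Fin.snoc y y')
      = ∑ x, stepLaw PS1 PX1 Qm q t x (s' + (x : ℕ) - (y' : ℕ)) y y' * Qm x x' := by
  rw [stateLaw, Finset.sum_filter, sum_traj_succ]
  simp only [stepLaw_eq_sum, Finset.sum_mul, Finset.sum_filter]
  rw [Finset.sum_comm]
  refine Finset.sum_congr rfl fun x _ => Finset.sum_congr rfl fun ω _ => ?_
  rw [Finset.sum_eq_single_of_mem y' (Finset.mem_univ _) fun y₂ _ hne => if_neg fun h =>
    hne (show ω.2.2 = y ∧ y₂ = y' by simpa [snocT] using h.2).2]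
  have hcond : Sat (snocT ω x y') (t + 1) = s' ∧ (snocT ω x y').2.2 = Fin.snoc y y'
      ↔ Sat ω t = s' + (x : ℕ) - (y' : ℕ) ∧ ω.2.2 = y := by
    rw [Sat_snocT_succ, snocT, Fin.snoc_inj]
    constructor
    · rintro ⟨hs, hy, -⟩
      exact ⟨by omega, hy⟩
    · rintro ⟨hs, hy⟩
      exact ⟨by omega, hy, rfl⟩
  rw [if_congr hcond rfl rfl, ite_mul, zero_mul, jointAMarkov_snocT, snocT, markovStep_snoc]

lemma stepLaw_nonneg (hPS1 : IsPMF PS1) (hPX1 : IsPMF PX1) (hQm : ∀ x, IsPMF (Qm x))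
    {q : PolicyA mx my ms} (hq : CondPMFA q) (t : ℕ) (x : Fin (mx + 1)) (s : ℤ)
    (y : Fin t → Fin (my + 1)) (y' : Fin (my + 1)) : 0 ≤ stepLaw PS1 PX1 Qm q t x s y y' :=
  Finset.sum_nonneg fun ω _ => jointAMarkov_nonneg hPS1 hPX1 hQm hq _ ω

lemma stepLaw_eq_zero_of_stateLaw_eq_zero (hPS1 : IsPMF PS1) (hPX1 : IsPMF PX1)
    (hQm : ∀ x, IsPMF (Qm x)) {q : PolicyA mx my ms} (hq : CondPMFA q) {t : ℕ}
    {x : Fin (mx + 1)} {s : ℤ} {y : Fin t → Fin (my + 1)}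
    (h : stateLaw PS1 PX1 Qm q t x s y = 0) (y' : Fin (my + 1)) :
    stepLaw PS1 PX1 Qm q t x s y y' = 0 := by
  rw [← sum_stepLaw hq, Finset.sum_eq_zero_iff_of_nonneg
    fun y' _ => stepLaw_nonneg hPS1 hPX1 hQm hq t x s y y'] at h
  exact h y' (Finset.mem_univ _)

variable (PS1 PX1 Qm)

/-- Off the support of `(X_t, S_t, Y^{t-1})` the output copies the demand, which leaves the
battery level unchanged. -/
noncomputable def condPolicy (hxy : mx ≤ my) (qa : PolicyA mx my ms) : PolicyB mx my ms :=
  fun t x s y y' =>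
    if stateLaw PS1 PX1 Qm qa t x s y = 0 then
      if y' = Fin.castLE (Nat.succ_le_succ hxy) x then 1 else 0
    else stepLaw PS1 PX1 Qm qa t x s y y' / stateLaw PS1 PX1 Qm qa t x s y

variable {PS1 PX1 Qm}

lemma condPMFB_condPolicy (hxy : mx ≤ my) (hPS1 : IsPMF PS1) (hPX1 : IsPMF PX1)
    (hQm : ∀ x, IsPMF (Qm x)) {qa : PolicyA mx my ms} (hqa : CondPMFA qa) :
    CondPMFB (condPolicy PS1 PX1 Qm hxy qa) := by
  intro t x s y
  by_cases h0 : stateLaw PS1 PX1 Qm qa t x s y = 0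
  · simp only [condPolicy, h0, if_true]
    exact ⟨fun y' => by split_ifs <;> norm_num, by simp⟩
  · have hnonneg : 0 ≤ stateLaw PS1 PX1 Qm qa t x s y :=
      sum_stepLaw hqa t x s y ▸ Finset.sum_nonneg fun y' _ =>
        stepLaw_nonneg hPS1 hPX1 hQm hqa t x s y y'
    simp only [condPolicy, h0, if_false]
    refine ⟨fun y' => div_nonneg (stepLaw_nonneg hPS1 hPX1 hQm hqa t x s y y') hnonneg, ?_⟩
    rw [← Finset.sum_div, sum_stepLaw hqa, div_self h0]

lemma feasibleB_condPolicy (hxy : mx ≤ my) (hPS1 : IsPMF PS1) (hPX1 : IsPMF PX1)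
    (hQm : ∀ x, IsPMF (Qm x)) {qa : PolicyA mx my ms} (hqa : FeasibleA qa) :
    FeasibleB (condPolicy PS1 PX1 Qm hxy qa) := by
  refine ⟨condPMFB_condPolicy hxy hPS1 hPX1 hQm hqa.1, fun t x s y hs0 hsm y' hne => ?_⟩
  by_cases h0 : stateLaw PS1 PX1 Qm qa t x s y = 0
  · have hy' : y' = Fin.castLE (Nat.succ_le_succ hxy) x := by
      by_contra h
      simp [condPolicy, h0, h] at hne
    subst hy'
    simp only [Fin.val_castLE]
    omega
  · have hstep : stepLaw PS1 PX1 Qm qa t x s y y' ≠ 0 := by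
      simpa [condPolicy, h0] using hne
    rw [stepLaw_eq_sum] at hstep
    obtain ⟨ω, hω, hterm⟩ := Finset.exists_ne_zero_of_sum_ne_zero hstep
    obtain ⟨hs, -⟩ := (Finset.mem_filter.mp hω).2
    have hbounds := hqa.2 t _ _ _ y' (right_ne_zero_of_mul hterm)
    rwa [hstate_snoc, Fin.snoc_last, hs] at hbounds

lemma stepLaw_condPolicy_of_stateLaw (hxy : mx ≤ my) (hPS1 : IsPMF PS1) (hPX1 : IsPMF PX1)
    (hQm : ∀ x, IsPMF (Qm x)) {qa : PolicyA mx my ms} (hqa : CondPMFA qa) {t : ℕ}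
    {x : Fin (mx + 1)} {s : ℤ} {y : Fin t → Fin (my + 1)}
    (h : stateLaw PS1 PX1 Qm (condPolicy PS1 PX1 Qm hxy qa).toA t x s y
      = stateLaw PS1 PX1 Qm qa t x s y) (y' : Fin (my + 1)) :
    stepLaw PS1 PX1 Qm (condPolicy PS1 PX1 Qm hxy qa).toA t x s y y'
      = stepLaw PS1 PX1 Qm qa t x s y y' := by
  rw [stepLaw_toA, h]
  by_cases h0 : stateLaw PS1 PX1 Qm qa t x s y = 0
  · rw [h0, mul_zero, stepLaw_eq_zero_of_stateLaw_eq_zero hPS1 hPX1 hQm hqa h0]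
  · rw [condPolicy, if_neg h0, div_mul_cancel₀ _ h0]

lemma stateLaw_condPolicy (hxy : mx ≤ my) (hPS1 : IsPMF PS1) (hPX1 : IsPMF PX1)
    (hQm : ∀ x, IsPMF (Qm x)) {qa : PolicyA mx my ms} (hqa : CondPMFA qa) (t : ℕ) :
    stateLaw PS1 PX1 Qm (condPolicy PS1 PX1 Qm hxy qa).toA t
      = stateLaw PS1 PX1 Qm qa t := by
  induction t with
  | zero =>
    funext x s y
    simp only [stateLaw, jointAMarkov_zero]
  | succ t ih =>
    funext x s y
    rw [← Fin.snoc_init_self y, stateLaw_succ, stateLaw_succ]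
    simp only [stepLaw_condPolicy_of_stateLaw hxy hPS1 hPX1 hQm hqa (congrFun₃ ih _ _ _)]

lemma pr_obsAt_condPolicy (hxy : mx ≤ my) (hPS1 : IsPMF PS1) (hPX1 : IsPMF PX1)
    (hQm : ∀ x, IsPMF (Qm x)) {qa : PolicyA mx my ms} (hqa : CondPMFA qa) {t : ℕ} (ht : t < T)
    (v : ℤ × ℤ × (Fin (t + 1) → ℤ)) :
    pr (jointAMarkov PS1 PX1 Qm qa T) (obsAt t) v
      = pr (jointBMarkov PS1 PX1 Qm (condPolicy PS1 PX1 Qm hxy qa) T) (obsAt t) v := by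
  have hqb := (condPMFB_condPolicy hxy hPS1 hPX1 hQm hqa).toA
  rw [jointBMarkov_eq_jointAMarkov_toA, pr_obsAt_eq_of_lt hPX1 hQm hqa ht,
    pr_obsAt_eq_of_lt hPX1 hQm hqb ht, obsAt_eq_comp_stepState]
  refine pr_comp_congr (fun u => ?_) obsOfStepState v
  exact (stepLaw_condPolicy_of_stateLaw hxy hPS1 hPX1 hQm hqa
    (congrFun₃ (stateLaw_condPolicy hxy hPS1 hPX1 hQm hqa t) _ _ _) u.2.2.2).symm

end InformationState

/-- For Markov demand and any feasible causal policy `qa`, there is a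
feasible policy `qb` in the class `Q_B` such that for every `t < T` the joint pmf of
`(X_t, S_t, Y^t)` induced by `qb` equals the one induced by `qa`; consequently
`Σ_t I^{qa}(X_t, S_t; Y_t | Y^{t-1}) = Σ_t I^{qb}(X_t, S_t; Y_t | Y^{t-1})`. -/
theorem exists_QB_matching_marginals (mx my ms T : ℕ) (hxy : mx ≤ my)
    (PX1 : Fin (mx + 1) → ℝ) (hPX1 : IsPMF PX1)
    (Qm : Fin (mx + 1) → Fin (mx + 1) → ℝ) (hQm : ∀ x, IsPMF (Qm x))
    (PS1 : Fin (ms + 1) → ℝ) (hPS1 : IsPMF PS1)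
    (qa : PolicyA mx my ms) (hqa : FeasibleA qa) :
    ∃ qb : PolicyB mx my ms, FeasibleB qb ∧
      (∀ t : ℕ, t < T →
        ∀ v : ℤ × ℤ × (Fin (t + 1) → ℤ),
          pr (jointAMarkov PS1 PX1 Qm qa T)
              (fun ω => (Xat ω t, Sat ω t, fun i : Fin (t + 1) => Yat ω (i : ℕ))) v
            = pr (jointBMarkov PS1 PX1 Qm qb T)
                (fun ω => (Xat ω t, Sat ω t, fun i : Fin (t + 1) => Yat ω (i : ℕ))) v) ∧
      (∑ t ∈ Finset.range T,
          condMutInfo (jointAMarkov PS1 PX1 Qm qa T)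
            (fun ω => (Xat ω t, Sat ω t)) (fun ω => Yat ω t)
            (fun ω => fun i : Fin t => Yat ω (i : ℕ))
        = ∑ t ∈ Finset.range T,
            condMutInfo (jointBMarkov PS1 PX1 Qm qb T)
              (fun ω => (Xat ω t, Sat ω t)) (fun ω => Yat ω t)
              (fun ω => fun i : Fin t => Yat ω (i : ℕ))) := by
  have hlaw := fun t (ht : t < T) => pr_obsAt_condPolicy hxy hPS1 hPX1 hQm hqa.1 ht
  refine ⟨condPolicy PS1 PX1 Qm hxy qa, feasibleB_condPolicy hxy hPS1 hPX1 hQm hqa, hlaw,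
    Finset.sum_congr rfl fun t ht => ?_⟩
  exact condMutInfo_comp_congr (hlaw t (Finset.mem_range.mp ht))
    (fun v : ℤ × ℤ × (Fin (t + 1) → ℤ) => (v.1, v.2.1)) (fun v => v.2.2 (Fin.last t))
    (fun v (i : Fin t) => v.2.2 i.castSucc)

end SmartMeter
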